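/- arXiv:math/0407425 — 8 statements merged into one kernel-verified Lean document; each statement's English description precedes it below -/
import Mathlib

section
/- The incidence matrix A of a 2-(v,k,λ) design with v > k has rank v over the rational numbers. -/
open Matrix

/-- The incidence matrix `A` (over ℚ) of a 2-(v,k,λ) design with `v > k`
has rank `v`. -/
theorem design_incidence_rank (v b k lam : ℕ) (hk : 2 ≤ k) (hkv : k < v)
    (hlam : 1 ≤ lam)
    (B : Fin b → Finset (Fin v))
    (hcard : ∀ i, (B i).card = k)
    (hpair : ∀ x y : Fin v, x ≠ y →
      (Finset.univ.filter (fun i => x ∈ B i ∧ y ∈ B i)).card = lam)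
    (A : Matrix (Fin b) (Fin v) ℚ)
    (hA : ∀ i j, A i j = if j ∈ B i then 1 else 0) :
    A.rank = v := by
  classical
  -- replication number: each point lies in the same number of blocks
  have hrep : ∀ x : Fin v,
      ((Finset.univ.filter (fun i => x ∈ B i)).card) * (k - 1) = lam * (v - 1) := by
    intro x
    have key : lam * (v - 1)
        = ∑ i : Fin b, (if x ∈ B i then k - 1 else 0) := by
      calc lam * (v - 1)
          = ∑ _y ∈ Finset.univ.erase x, lam := by
            rw [Finset.sum_const, Finset.card_erase_of_mem (Finset.mem_univ x),
              Finset.card_univ, Fintype.card_fin, smul_eq_mul, mul_comm]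
        _ = ∑ y ∈ Finset.univ.erase x,
              (Finset.univ.filter (fun i => x ∈ B i ∧ y ∈ B i)).card := by
            refine Finset.sum_congr rfl fun y hy => ?_
            exact (hpair x y (Ne.symm (Finset.mem_erase.mp hy).1)).symm
        _ = ∑ y ∈ Finset.univ.erase x, ∑ i : Fin b,
              (if x ∈ B i ∧ y ∈ B i then 1 else 0) := by
            refine Finset.sum_congr rfl fun y _ => ?_
            exact Finset.card_filter _ _
        _ = ∑ i : Fin b, ∑ y ∈ Finset.univ.erase x,
              (if x ∈ B i ∧ y ∈ B i then 1 else 0) := Finset.sum_comm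
        _ = ∑ i : Fin b, (if x ∈ B i then k - 1 else 0) := by
            refine Finset.sum_congr rfl fun i _ => ?_
            by_cases hx : x ∈ B i
            · simp only [hx, true_and, if_pos]
              rw [← Finset.card_filter]
              have : (Finset.univ.erase x).filter (fun y => y ∈ B i)
                  = (B i).erase x := by
                ext y; simp [Finset.mem_erase, and_comm]
              rw [this, Finset.card_erase_of_mem hx, hcard]
            · simp [hx]
    rw [key, Finset.sum_ite, Finset.sum_const, Finset.sum_const_zero, add_zero,
      smul_eq_mul]
  -- entries of AᵀA
  have hentry : ∀ x y : Fin v, (Aᵀ * A) x y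
      = ((Finset.univ.filter (fun i => x ∈ B i ∧ y ∈ B i)).card : ℚ) := by
    intro x y
    rw [Matrix.mul_apply]
    rw [Finset.card_filter]
    push_cast
    refine Finset.sum_congr rfl fun i _ => ?_
    simp only [Matrix.transpose_apply, hA]
    split_ifs with h1 h2 h3 <;> simp_all
  have hk1 : ((k : ℚ) - 1) ≠ 0 := by
    have : (2 : ℚ) ≤ (k : ℚ) := by exact_mod_cast hk
    linarith
  set r : ℚ := lam * ((v : ℚ) - 1) / ((k : ℚ) - 1) with hr
  -- diagonal entries equal r
  have hdiag : ∀ x : Fin v,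
      (((Finset.univ.filter (fun i => x ∈ B i)).card : ℚ)) = r := by
    intro x
    have h := hrep x
    have hk1' : 1 ≤ k := le_trans (by norm_num) hk
    have hv1' : 1 ≤ v := le_trans hk1' (le_of_lt hkv)
    have hcast : (((Finset.univ.filter (fun i => x ∈ B i)).card : ℚ)) * ((k : ℚ) - 1)
        = lam * ((v : ℚ) - 1) := by
      have h2 : (((Finset.univ.filter (fun i => x ∈ B i)).card * (k - 1) : ℕ) : ℚ)
          = ((lam * (v - 1) : ℕ) : ℚ) := by exact_mod_cast h
      push_cast [Nat.cast_sub hk1', Nat.cast_sub hv1'] at h2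
      exact h2
    rw [hr, eq_div_iff hk1]
    exact hcast
  -- the Gram matrix
  set J : Matrix (Fin v) (Fin v) ℚ := Matrix.of (fun _ _ => 1) with hJ
  set a : ℚ := r - lam with haa
  have hM : Aᵀ * A = a • (1 : Matrix (Fin v) (Fin v) ℚ) + (lam : ℚ) • J := by
    ext x y
    rw [hentry x y]
    by_cases hxy : x = y
    · subst hxy
      have : (Finset.univ.filter (fun i => x ∈ B i ∧ x ∈ B i))
          = Finset.univ.filter (fun i => x ∈ B i) := by
        apply Finset.filter_congr; intro i _; simp
      rw [this, hdiag x]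
      simp only [Matrix.add_apply, Matrix.smul_apply, Matrix.one_apply_eq, hJ,
        Matrix.of_apply, smul_eq_mul, mul_one, haa]
      ring
    · rw [hpair x y hxy]
      simp [hJ, Matrix.one_apply, hxy]
  have hJJ : J * J = (v : ℚ) • J := by
    ext x y
    simp [hJ, Matrix.mul_apply, Finset.card_univ]
  -- positivity facts
  have hlamQ : (1 : ℚ) ≤ (lam : ℚ) := by exact_mod_cast hlam
  have hkQ : ((k : ℚ)) < (v : ℚ) := by exact_mod_cast hkv
  have ha : 0 < a := by
    rw [haa, hr]
    rw [lt_sub_iff_add_lt, zero_add, lt_div_iff₀ (by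
      have : (2:ℚ) ≤ (k:ℚ) := by exact_mod_cast hk
      linarith)]
    nlinarith
  have he : 0 < a + (v : ℚ) * lam := by
    have : (0:ℚ) ≤ (v : ℚ) * lam := by positivity
    linarith
  -- explicit right inverse of the Gram matrix
  set c : ℚ := 1 / a with hc
  set d : ℚ := -lam / (a * (a + (v : ℚ) * lam)) with hd
  set N : Matrix (Fin v) (Fin v) ℚ := c • (1 : Matrix (Fin v) (Fin v) ℚ) + d • J with hN
  have hMN : (Aᵀ * A) * N = 1 := by
    rw [hM, hN]
    rw [add_mul, mul_add, mul_add, smul_mul_assoc, smul_mul_assoc, smul_mul_assoc,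
      smul_mul_assoc, mul_smul_comm, mul_smul_comm, mul_smul_comm, mul_smul_comm,
      one_mul, mul_one, hJJ, smul_smul, smul_smul, smul_smul, smul_smul, smul_smul]
    have h1 : a * c = 1 := by
      rw [hc]; field_simp
    have h2 : a * d + ((lam : ℚ) * c + (lam : ℚ) * ((v:ℚ) * d)) = 0 := by
      rw [hc, hd]; field_simp; ring
    rw [h1, one_smul, one_mul]
    have h2' : a * d + ((lam : ℚ) * c + (lam : ℚ) * d * (v:ℚ)) = 0 := by
      rw [hc, hd]; field_simp; ring
    match_scalars
    · ring
    · linarith [h2']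
  have : Invertible (Aᵀ * A) := invertibleOfRightInverse _ _ hMN
  have hrank : (Aᵀ * A).rank = v := by
    rw [Matrix.rank_of_isUnit _ (isUnit_of_invertible _), Fintype.card_fin]
  rw [← Matrix.rank_transpose_mul_self, hrank]
end

section
/- Let D be a 2-(v,k,λ) design of order n = r - λ, and let F be a field of characteristic p where p does not divide n. Then rank_F(A) ≥ v - 1, with equality if and only if p divides k. -/
open Matrix

/-- Let `D` be a 2-(v,k,λ) design with replication number `r`
(`r (k-1) = λ (v-1)`) and order `n = r - λ`, and let `F` be a field of prime
characteristic `p` with `p ∤ n`.  Then the rank over `F` of the incidence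
matrix satisfies `rank ≥ v - 1`, with equality if and only if `p ∣ k`. -/
theorem design_rank_char_not_dividing_order
    (F : Type*) [Field F] (p : ℕ) [hp : Fact p.Prime] [CharP F p]
    (v b k lam r : ℕ) (hv : 2 ≤ v) (hk : 2 ≤ k) (hlam : 1 ≤ lam)
    (B : Fin b → Finset (Fin v))
    (hcard : ∀ i, (B i).card = k)
    (hpair : ∀ x y : Fin v, x ≠ y →
      (Finset.univ.filter (fun i => x ∈ B i ∧ y ∈ B i)).card = lam)
    (hr : ∀ x : Fin v, (Finset.univ.filter (fun i => x ∈ B i)).card = r)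
    (hn : ¬ p ∣ (r - lam))
    (A : Matrix (Fin b) (Fin v) F)
    (hA : ∀ i j, A i j = if j ∈ B i then 1 else 0) :
    v - 1 ≤ A.rank ∧ (A.rank = v - 1 ↔ p ∣ k) := by
  obtain ⟨x0, y0, hxy⟩ : ∃ x y : Fin v, x ≠ y :=
    ⟨⟨0, by omega⟩, ⟨1, by omega⟩, by simp [Fin.ext_iff]⟩
  have hlr : lam ≤ r := by
    rw [← hpair x0 y0 hxy, ← hr x0]
    exact Finset.card_le_card (fun i hi => by
      simp only [Finset.mem_filter] at *; exact ⟨hi.1, hi.2.1⟩)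
  obtain ⟨i0⟩ : Nonempty (Fin b) := by
    have h1 := hpair x0 y0 hxy
    have hne : (Finset.univ.filter (fun i => x0 ∈ B i ∧ y0 ∈ B i)).Nonempty := by
      rw [← Finset.card_pos, h1]; omega
    exact ⟨hne.choose⟩
  have hnF : ((r : F) - (lam : F)) ≠ 0 := by
    rw [← Nat.cast_sub hlr]
    intro h; exact hn ((CharP.cast_eq_zero_iff F p _).mp h)
  -- N = Aᵀ * A entries
  have hN : ∀ j j' : Fin v, (Aᵀ * A) j j' = if j = j' then (r : F) else (lam : F) := by
    intro j j'
    have h1 : (Aᵀ * A) j j' = ∑ i, (if j ∈ B i ∧ j' ∈ B i then (1:F) else 0) := by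
      simp only [Matrix.mul_apply, Matrix.transpose_apply, hA, ite_and]
      congr 1; ext i
      by_cases h : j ∈ B i <;> by_cases h' : j' ∈ B i <;> simp [h, h']
    rw [h1, Finset.sum_boole]
    by_cases h : j = j'
    · subst h; simp only [and_self, if_true]
      rw [hr j]
    · rw [hpair j j' h, if_neg h]
  -- kernel of A consists of constant vectors
  have hker : ∀ x : Fin v → F, A.mulVec x = 0 → ∃ c : F, x = fun _ => c := by
    intro x hx
    have hMx : (Aᵀ * A).mulVec x = 0 := by
      rw [← Matrix.mulVec_mulVec, hx, Matrix.mulVec_zero]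
    have heq : ∀ j : Fin v, (lam : F) * (∑ j', x j') + ((r : F) - lam) * x j = 0 := by
      intro j
      have h2 := congrFun hMx j
      simp only [Matrix.mulVec, dotProduct, hN, Pi.zero_apply] at h2
      have h3 : ∀ j' : Fin v, (if j = j' then (r:F) else lam) * x j'
          = (lam : F) * x j' + (if j = j' then ((r:F) - lam) * x j' else 0) := by
        intro j'; by_cases h : j = j' <;> simp [h] <;> ring
      rw [Finset.sum_congr rfl (fun j' _ => h3 j'), Finset.sum_add_distrib,
        Finset.sum_ite_eq, if_pos (Finset.mem_univ j), ← Finset.mul_sum] at h2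
      exact h2
    refine ⟨x x0, funext fun j => ?_⟩
    have h4 := heq j
    rw [← heq x0] at h4
    have h5 : ((r : F) - lam) * (x j - x x0) = 0 := by ring_nf; linear_combination h4
    exact sub_eq_zero.mp ((mul_eq_zero.mp h5).resolve_left hnF)
  -- mulVec of the constant-one vector
  have hones : ∀ (c : F) (i : Fin b), A.mulVec (fun _ => c) i = c * k := by
    intro c i
    simp only [Matrix.mulVec, dotProduct, hA, ite_mul, one_mul, zero_mul]
    rw [Finset.sum_ite_mem, Finset.univ_inter, Finset.sum_const, hcard, nsmul_eq_mul]
    ring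
  have hone_ne : (fun _ => (1:F) : Fin v → F) ≠ 0 := by
    intro h
    have := congrFun h x0
    simp at this
  -- rank-nullity
  have hrn : A.rank + Module.finrank F (LinearMap.ker A.mulVecLin) = v := by
    have := LinearMap.finrank_range_add_finrank_ker A.mulVecLin
    simp only [Module.finrank_pi, Module.finrank_fintype_fun_eq_card, Fintype.card_fin] at this
    exact this
  have hnull_le : Module.finrank F (LinearMap.ker A.mulVecLin) ≤ 1 := by
    have hle : LinearMap.ker A.mulVecLin ≤ Submodule.span F {(fun _ => (1:F) : Fin v → F)} := by
      intro x hx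
      obtain ⟨c, rfl⟩ := hker x (by simpa using hx)
      have : (fun _ => c : Fin v → F) = c • (fun _ => (1:F)) := by
        funext j; simp
      rw [this]
      exact Submodule.smul_mem _ c (Submodule.mem_span_singleton_self _)
    calc Module.finrank F (LinearMap.ker A.mulVecLin)
        ≤ Module.finrank F (Submodule.span F {(fun _ => (1:F) : Fin v → F)}) :=
          Submodule.finrank_mono hle
      _ = 1 := finrank_span_singleton hone_ne
  have hkeriff : LinearMap.ker A.mulVecLin ≠ ⊥ ↔ p ∣ k := by
    constructor
    · intro h
      obtain ⟨x, hx, hx0⟩ := Submodule.exists_mem_ne_zero_of_ne_bot h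
      obtain ⟨c, rfl⟩ := hker x (by simpa using hx)
      have hc : c ≠ 0 := fun h => hx0 (by simp [h]; rfl)
      have h1 : c * k = 0 := by
        have := congrFun (show A.mulVec (fun _ => c) = 0 by simpa using hx) i0
        rwa [hones c i0] at this
      have hk0 : (k : F) = 0 := by
        rcases mul_eq_zero.mp h1 with h | h
        · exact absurd h hc
        · exact h
      exact (CharP.cast_eq_zero_iff F p k).mp hk0
    · intro hdvd
      have hk0 : (k : F) = 0 := (CharP.cast_eq_zero_iff F p k).mpr hdvd
      intro hbot
      have : (fun _ => (1:F) : Fin v → F) ∈ LinearMap.ker A.mulVecLin := by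
        simp only [LinearMap.mem_ker, Matrix.mulVecLin_apply]
        funext i; rw [hones 1 i, hk0, mul_zero]; rfl
      rw [hbot, Submodule.mem_bot] at this
      exact hone_ne this
  have hker0 : Module.finrank F (LinearMap.ker A.mulVecLin) = 0 ↔
      LinearMap.ker A.mulVecLin = ⊥ := Submodule.finrank_eq_zero
  constructor
  · omega
  · constructor
    · intro h
      have : Module.finrank F (LinearMap.ker A.mulVecLin) = 1 := by omega
      exact hkeriff.mp (fun hb => by rw [hker0.mpr hb] at this; omega)
    · intro h
      have hne := hkeriff.mpr h
      have : Module.finrank F (LinearMap.ker A.mulVecLin) ≠ 0 :=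
        fun h0 => hne (hker0.mp h0)
      omega
end

section
/- Let D be a 2-(v,k,λ) design of order n, and p a prime dividing n. Then rank_p(D) ≤ (b+1)/2, where b is the number of blocks. -/
open Matrix

/-- Sylvester's rank inequality for matrices over a field. -/
lemma sylvester_rank_ineq {K : Type*} [Field K] {m n o : Type*}
    [Fintype m] [Fintype n] [Fintype o] [DecidableEq n] [DecidableEq o]
    (M : Matrix m n K) (N : Matrix n o K) :
    M.rank + N.rank ≤ (M * N).rank + Fintype.card n := by
  classical
  set f := N.mulVecLin
  set g := M.mulVecLin
  have hcomp : (M * N).mulVecLin = g.comp f := Matrix.mulVecLin_mul M N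
  -- rank nullity for g restricted to range f
  have h1 : Module.finrank K (Submodule.map g (LinearMap.range f)) +
      Module.finrank K (Submodule.comap (LinearMap.range f).subtype (LinearMap.ker g)) =
      Module.finrank K (LinearMap.range f) := by
    have := LinearMap.finrank_range_add_finrank_ker (g.comp (LinearMap.range f).subtype)
    rwa [LinearMap.range_comp, Submodule.range_subtype, LinearMap.ker_comp] at this
  have h2 : Module.finrank K
      (Submodule.comap (LinearMap.range f).subtype (LinearMap.ker g)) ≤
      Module.finrank K (LinearMap.ker g) := by
    rw [← Submodule.finrank_map_subtype_eq (LinearMap.range f)]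
    exact Submodule.finrank_mono (Submodule.map_comap_le _ _)
  have hrankMN : (M * N).rank = Module.finrank K (Submodule.map g (LinearMap.range f)) := by
    rw [Matrix.rank, hcomp, LinearMap.range_comp]
  have hrankN : N.rank = Module.finrank K (LinearMap.range f) := rfl
  have hrankM : M.rank = Module.finrank K (LinearMap.range g) := rfl
  have h3' : Module.finrank K (LinearMap.range g) + Module.finrank K (LinearMap.ker g)
      = Fintype.card n := by
    have := LinearMap.finrank_range_add_finrank_ker g
    rwa [Module.finrank_pi] at this
  rw [hrankMN, hrankN, hrankM]
  omega

/-- (Klemm) Let `D` be a 2-(v,k,λ) design of order `n = r - λ` and let `p` be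
a prime dividing `n`.  Then the `p`-rank of `D` (the rank of its incidence
matrix over a field of characteristic `p`) is at most `(b+1)/2`, i.e.
`2 · rank_p(D) ≤ b + 1`. -/
theorem klemm_rank_bound
    (F : Type*) [Field F] (p : ℕ) [hp : Fact p.Prime] [CharP F p]
    (v b k lam r : ℕ) (hv : 2 ≤ v) (hk : 2 ≤ k) (hlam : 1 ≤ lam)
    (B : Fin b → Finset (Fin v))
    (hcard : ∀ i, (B i).card = k)
    (hpair : ∀ x y : Fin v, x ≠ y →
      (Finset.univ.filter (fun i => x ∈ B i ∧ y ∈ B i)).card = lam)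
    (hr : ∀ x : Fin v, (Finset.univ.filter (fun i => x ∈ B i)).card = r)
    (hrlam : lam < r)
    (hn : p ∣ (r - lam))
    (A : Matrix (Fin b) (Fin v) F)
    (hA : ∀ i j, A i j = if j ∈ B i then 1 else 0) :
    2 * A.rank ≤ b + 1 := by
  classical
  -- r = lam in F
  have hrlamF : (r : F) = (lam : F) := by
    have hle : lam ≤ r := le_of_lt hrlam
    have h0 : ((r - lam : ℕ) : F) = 0 := (CharP.cast_eq_zero_iff F p _).mpr hn
    rw [Nat.cast_sub hle, sub_eq_zero] at h0
    exact h0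
  -- Aᵀ * A is the constant matrix lam
  have key : Aᵀ * A = (Matrix.of (fun (_ : Fin v) (_ : Fin 1) => (lam : F))) *
      (Matrix.of (fun (_ : Fin 1) (_ : Fin v) => (1 : F))) := by
    ext x y
    simp only [Matrix.mul_apply, Matrix.transpose_apply, Matrix.of_apply,
      Finset.sum_const, Finset.card_univ, Fintype.card_fin, one_smul, mul_one, smul_eq_mul,
      Nat.smul_one_eq_cast]
    have : ∀ i : Fin b, A i x * A i y = if x ∈ B i ∧ y ∈ B i then (1:F) else 0 := by
      intro i
      rw [hA, hA]
      by_cases h1 : x ∈ B i <;> by_cases h2 : y ∈ B i <;> simp [h1, h2]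
    rw [Finset.sum_congr rfl (fun i _ => this i), Finset.sum_boole]
    by_cases hxy : x = y
    · subst hxy
      have : (Finset.univ.filter (fun i => x ∈ B i ∧ x ∈ B i)) =
          (Finset.univ.filter (fun i => x ∈ B i)) := by
        apply Finset.filter_congr; intro i _; simp
      rw [this, hr x]
      exact hrlamF
    · rw [hpair x y hxy]
  -- rank (Aᵀ * A) ≤ 1
  have hrk1 : (Aᵀ * A).rank ≤ 1 := by
    rw [key]
    refine le_trans (Matrix.rank_mul_le_right _ _) ?_
    refine le_trans (Matrix.rank_le_card_height _) ?_
    simp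
  -- Sylvester
  have hsyl := sylvester_rank_ineq Aᵀ A
  rw [Matrix.rank_transpose] at hsyl
  have : Fintype.card (Fin b) = b := Fintype.card_fin b
  omega
end

section
/- Let D be a 2-(v,k,λ) design of order n, p a prime with p | n, p ∤ λ, and p² ∤ n. Then the dual code C_p(D)^⊥ is contained in C_p(D), and consequently rank_p(D) ≥ v/2. -/
/-!
Lift two vectors of `C_p(D)^⊥` to integer vectors `X`, `Y`. Every entry of `N X` and `N Y` is then
divisible by `p`, where `N` is the integer incidence matrix, and `Nᵀ N = n I + λ J` gives
`(N X) ⬝ (N Y) = n (X ⬝ Y) + λ (∑ X) (∑ Y)`. Taking `X = Y`, `p ∣ n` and `p ∤ λ` force `p ∣ ∑ X`;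
hence `p² ∣ n (X ⬝ Y)`, and since `p` divides `n` exactly once, `p ∣ X ⬝ Y`. So `C^⊥` is
self-orthogonal, whence `C^⊥ ⊆ C^⊥⊥ = C` and `v - rank = dim C^⊥ ≤ dim C = rank`.
-/

open Matrix

section DualCode

variable {K n : Type*} [Field K] [Fintype n] {W : Submodule K (n → K)}

theorem dotProductBilin_isRefl :
    LinearMap.BilinForm.IsRefl (dotProductBilin K K : LinearMap.BilinForm K (n → K)) :=
  fun x y h => by simpa [dotProduct_comm] using h

theorem dotProductBilin_nondegenerate :
    LinearMap.BilinForm.Nondegenerate (dotProductBilin K K : LinearMap.BilinForm K (n → K)) := by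
  classical
  exact ⟨fun x hx => funext fun i => by simpa using hx (Pi.single i 1),
    fun y hy => funext fun i => by simpa using hy (Pi.single i 1)⟩

def dualCode (W : Submodule K (n → K)) : Submodule K (n → K) :=
  LinearMap.BilinForm.orthogonal (dotProductBilin K K) W

theorem mem_dualCode {x : n → K} : x ∈ dualCode W ↔ ∀ y ∈ W, x ⬝ᵥ y = 0 := by
  simp [dualCode, LinearMap.BilinForm.mem_orthogonal_iff, dotProduct_comm]

theorem dualCode_dualCode (W : Submodule K (n → K)) : dualCode (dualCode W) = W :=
  LinearMap.BilinForm.orthogonal_orthogonal dotProductBilin_nondegenerate dotProductBilin_isRefl W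

theorem finrank_dualCode (W : Submodule K (n → K)) :
    Module.finrank K (dualCode W) = Fintype.card n - Module.finrank K W := by
  rw [dualCode, LinearMap.BilinForm.finrank_orthogonal dotProductBilin_nondegenerate,
    Module.finrank_fintype_fun_eq_card]

def IsSelfOrthogonal (C : Submodule K (n → K)) : Prop :=
  C ≤ dualCode C

theorem IsSelfOrthogonal.dualCode_le (h : IsSelfOrthogonal (dualCode W)) : dualCode W ≤ W :=
  h.trans (dualCode_dualCode W).le

theorem IsSelfOrthogonal.card_le_two_mul_finrank (h : IsSelfOrthogonal (dualCode W)) :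
    Fintype.card n ≤ 2 * Module.finrank K W := by
  have := Submodule.finrank_mono h.dualCode_le
  rw [finrank_dualCode] at this
  omega

theorem mulVec_eq_zero_of_mem_dualCode_span_row {m : Type*} {A : Matrix m n K} {x : n → K}
    (hx : x ∈ dualCode (Submodule.span K (Set.range A.row))) : A *ᵥ x = 0 :=
  funext fun i => (dotProduct_comm _ _).trans <|
    mem_dualCode.1 hx _ (Submodule.subset_span ⟨i, rfl⟩)

end DualCode

theorem Prime.dvd_of_sq_dvd_mul {M : Type*} [CommMonoidWithZero M] [IsLeftCancelMulZero M] {p a z : M}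
    (hp : Prime p) (ha : p ∣ a) (ha2 : ¬ p ^ 2 ∣ a) (h : p ^ 2 ∣ a * z) : p ∣ z := by
  obtain ⟨m, rfl⟩ := ha
  have hm : ¬ p ∣ m := fun hm => ha2 (sq p ▸ mul_dvd_mul_left p hm)
  rw [sq, mul_assoc] at h
  exact (hp.dvd_or_dvd ((mul_dvd_mul_iff_left hp.ne_zero).1 h)).resolve_left hm

section Gram

variable {R m n : Type*} [CommSemiring R] [Fintype m] [Fintype n]

theorem sq_dvd_dotProduct {p : R} {x y : n → R} (hx : ∀ i, p ∣ x i) (hy : ∀ i, p ∣ y i) :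
    p ^ 2 ∣ x ⬝ᵥ y :=
  Finset.dvd_sum fun i _ => sq p ▸ mul_dvd_mul (hx i) (hy i)

theorem vecMul_allOnes_dotProduct (x y : n → R) :
    x ᵥ* ((of fun _ _ => 1) : Matrix n n R) ⬝ᵥ y = (∑ i, x i) * ∑ i, y i := by
  simp only [dotProduct, vecMul, of_apply, mul_one, Finset.mul_sum]

variable [DecidableEq n] {N : Matrix m n R} {a c : R}

theorem mulVec_dotProduct_mulVec_of_transpose_mul_self_eq
    (hN : Nᵀ * N = a • 1 + c • of fun _ _ => 1) (x y : n → R) :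
    (N *ᵥ x) ⬝ᵥ (N *ᵥ y) = a * (x ⬝ᵥ y) + c * ((∑ i, x i) * ∑ i, y i) := by
  rw [dotProduct_mulVec, ← vecMul_transpose, vecMul_vecMul, hN, vecMul_add, vecMul_smul,
    vecMul_smul, vecMul_one, add_dotProduct, smul_dotProduct, smul_dotProduct,
    vecMul_allOnes_dotProduct, smul_eq_mul, smul_eq_mul]

end Gram

theorem Prime.dvd_dotProduct_of_transpose_mul_self_eq {R m n : Type*} [CommRing R] [IsDomain R]
    [Fintype m] [Fintype n] [DecidableEq n] {N : Matrix m n R} {a c p : R} (hp : Prime p)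
    (hN : Nᵀ * N = a • 1 + c • of fun _ _ => 1) (ha : p ∣ a) (ha2 : ¬ p ^ 2 ∣ a) (hc : ¬ p ∣ c)
    {x y : n → R} (hx : ∀ i, p ∣ (N *ᵥ x) i) (hy : ∀ i, p ∣ (N *ᵥ y) i) : p ∣ x ⬝ᵥ y := by
  have gram := mulVec_dotProduct_mulVec_of_transpose_mul_self_eq hN
  -- `p ∣ (N z) ⬝ (N z) = a (z ⬝ z) + c (∑ z)²` with `p ∣ a` and `p ∤ c`
  have hsum : ∀ z : n → R, (∀ i, p ∣ (N *ᵥ z) i) → p ∣ ∑ i, z i := fun z hz => by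
    have h := (dvd_pow_self p two_ne_zero).trans (sq_dvd_dotProduct hz hz)
    rw [gram, dvd_add_right (dvd_mul_of_dvd_left ha _)] at h
    exact (hp.dvd_or_dvd ((hp.dvd_or_dvd h).resolve_left hc)).elim id id
  refine hp.dvd_of_sq_dvd_mul ha ha2 ?_
  have h := sq_dvd_dotProduct hx hy
  rwa [gram, dvd_add_left (dvd_mul_of_dvd_right (sq p ▸ mul_dvd_mul (hsum x hx) (hsum y hy)) c)]
    at h

theorem ZMod.dotProduct_eq_zero_of_transpose_mul_self_eq {m n : Type*} [Fintype m] [Fintype n]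
    [DecidableEq n] {p : ℕ} [Fact p.Prime] {N : Matrix m n ℤ} {a c : ℤ}
    (hN : Nᵀ * N = a • 1 + c • of fun _ _ => 1) (ha : (p : ℤ) ∣ a) (ha2 : ¬ (p : ℤ) ^ 2 ∣ a)
    (hc : ¬ (p : ℤ) ∣ c) {x y : n → ZMod p} (hx : N.map (↑) *ᵥ x = 0) (hy : N.map (↑) *ᵥ y = 0) :
    x ⬝ᵥ y = 0 := by
  set f := Int.castRingHom (ZMod p)
  have lift : ∀ z : n → ZMod p, f ∘ (fun j => (z j).cast) = z := fun z =>
    funext fun j => ZMod.intCast_zmod_cast (z j)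
  have hdvd : ∀ z : n → ZMod p, N.map (↑) *ᵥ z = 0 → ∀ i, (p : ℤ) ∣ (N *ᵥ fun j => (z j).cast) i :=
    fun z hz i => by
      rw [← ZMod.intCast_zmod_eq_zero_iff_dvd, ← eq_intCast f, RingHom.map_mulVec, lift]
      exact congrFun hz i
  have hp : Prime (p : ℤ) := Nat.prime_iff_prime_int.1 Fact.out
  rw [← lift x, ← lift y, ← RingHom.map_dotProduct, eq_intCast, ZMod.intCast_zmod_eq_zero_iff_dvd]
  exact hp.dvd_dotProduct_of_transpose_mul_self_eq hN ha ha2 hc (hdvd x hx) (hdvd y hy)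

section Incidence

variable {ι α : Type*} [DecidableEq α]

def incidenceMatrix (R : Type*) [Zero R] [One R] (B : ι → Finset α) : Matrix ι α R :=
  of fun i j => if j ∈ B i then 1 else 0

theorem incidenceMatrix_map_intCast (R : Type*) [AddGroupWithOne R] (B : ι → Finset α) :
    (incidenceMatrix ℤ B).map ((↑) : ℤ → R) = incidenceMatrix R B := by
  ext i j
  simp only [incidenceMatrix, map_apply, of_apply]
  split_ifs <;> simp

variable [Fintype ι] {B : ι → Finset α} {lam r : ℕ}

theorem incidenceMatrix_transpose_mul_self (R : Type*) [Ring R]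
    (hpair : ∀ x y : α, x ≠ y → (Finset.univ.filter fun i => x ∈ B i ∧ y ∈ B i).card = lam)
    (hr : ∀ x : α, (Finset.univ.filter fun i => x ∈ B i).card = r) (hle : lam ≤ r) :
    (incidenceMatrix R B)ᵀ * incidenceMatrix R B =
      ((r - lam : ℕ) : R) • 1 + (lam : R) • of fun _ _ => 1 := by
  ext x y
  simp only [incidenceMatrix, mul_apply, transpose_apply, of_apply, ite_zero_mul_ite_zero,
    mul_one, Finset.sum_boole, Matrix.add_apply, Matrix.smul_apply, one_apply, smul_eq_mul]
  rcases eq_or_ne x y with rfl | hxy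
  · simp [hr, Nat.cast_sub hle]
  · simp [hxy, hpair x y hxy]

end Incidence

theorem dotProduct_eq_zero_of_incidenceMatrix_mulVec_eq_zero {ι α : Type*} [Fintype ι]
    [Fintype α] [DecidableEq α] {B : ι → Finset α} {lam r p : ℕ} [Fact p.Prime]
    (hpair : ∀ x y : α, x ≠ y → (Finset.univ.filter fun i => x ∈ B i ∧ y ∈ B i).card = lam)
    (hr : ∀ x : α, (Finset.univ.filter fun i => x ∈ B i).card = r) (hle : lam ≤ r)
    (hn : p ∣ r - lam) (hnl : ¬ p ∣ lam) (hn2 : ¬ p ^ 2 ∣ r - lam) {x y : α → ZMod p}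
    (hx : incidenceMatrix (ZMod p) B *ᵥ x = 0) (hy : incidenceMatrix (ZMod p) B *ᵥ y = 0) :
    x ⬝ᵥ y = 0 := by
  rw [← incidenceMatrix_map_intCast] at hx hy
  exact ZMod.dotProduct_eq_zero_of_transpose_mul_self_eq
    (incidenceMatrix_transpose_mul_self ℤ hpair hr hle) (by exact_mod_cast hn)
    (by exact_mod_cast hn2) (by exact_mod_cast hnl) hx hy

theorem klemm_selforthogonal_dual_general
    (p : ℕ) [hp : Fact p.Prime]
    (v b lam r : ℕ)
    (B : Fin b → Finset (Fin v))
    (hpair : ∀ x y : Fin v, x ≠ y →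
      (Finset.univ.filter (fun i => x ∈ B i ∧ y ∈ B i)).card = lam)
    (hr : ∀ x : Fin v, (Finset.univ.filter (fun i => x ∈ B i)).card = r)
    (hrlam : lam < r)
    (hn : p ∣ (r - lam)) (hnl : ¬ p ∣ lam) (hn2 : ¬ p ^ 2 ∣ (r - lam))
    (A : Matrix (Fin b) (Fin v) (ZMod p))
    (hA : ∀ i j, A i j = if j ∈ B i then 1 else 0) :
    (∀ x : Fin v → ZMod p,
      (∀ y ∈ Submodule.span (ZMod p) (Set.range fun i => A i), x ⬝ᵥ y = 0) →
        x ∈ Submodule.span (ZMod p) (Set.range fun i => A i)) ∧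
    v ≤ 2 * A.rank := by
  obtain rfl : A = incidenceMatrix (ZMod p) B := Matrix.ext hA
  set C := Submodule.span (ZMod p) (Set.range (incidenceMatrix (ZMod p) B).row)
  have hself : IsSelfOrthogonal (dualCode C) := fun x hx => mem_dualCode.2 fun y hy =>
    dotProduct_eq_zero_of_incidenceMatrix_mulVec_eq_zero hpair hr hrlam.le hn hnl hn2
      (mulVec_eq_zero_of_mem_dualCode_span_row hx) (mulVec_eq_zero_of_mem_dualCode_span_row hy)
  refine ⟨fun x hx => hself.dualCode_le (mem_dualCode.2 hx), ?_⟩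
  simpa [rank_eq_finrank_span_row] using hself.card_le_two_mul_finrank

/-- (Klemm) Let `D` be a 2-(v,k,λ) design of order `n = r - λ`, and let `p`
be a prime with `p ∣ n`, `p ∤ λ` and `p² ∤ n`.  Then the dual of the `p`-ary
block code `C_p(D)` (the row span over `𝔽_p` of the incidence matrix) is
contained in `C_p(D)`, and consequently `rank_p(D) ≥ v/2`. -/
theorem klemm_selforthogonal_dual
    (p : ℕ) [hp : Fact p.Prime]
    (v b k lam r : ℕ) (hv : 2 ≤ v) (hk : 2 ≤ k) (hlam : 1 ≤ lam)
    (B : Fin b → Finset (Fin v))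
    (hcard : ∀ i, (B i).card = k)
    (hpair : ∀ x y : Fin v, x ≠ y →
      (Finset.univ.filter (fun i => x ∈ B i ∧ y ∈ B i)).card = lam)
    (hr : ∀ x : Fin v, (Finset.univ.filter (fun i => x ∈ B i)).card = r)
    (hrlam : lam < r)
    (hn : p ∣ (r - lam)) (hnl : ¬ p ∣ lam) (hn2 : ¬ p ^ 2 ∣ (r - lam))
    (A : Matrix (Fin b) (Fin v) (ZMod p))
    (hA : ∀ i j, A i j = if j ∈ B i then 1 else 0) :
    (∀ x : Fin v → ZMod p,
      (∀ y ∈ Submodule.span (ZMod p) (Set.range fun i => A i), x ⬝ᵥ y = 0) →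
        x ∈ Submodule.span (ZMod p) (Set.range fun i => A i)) ∧
    v ≤ 2 * A.rank :=
  klemm_selforthogonal_dual_general p (hp := hp) v b lam r B hpair hr hrlam hn hnl hn2 A hA
end

section
/- For a symmetric 2-(v,k,λ) design of order n and t = gcd(n,λ), the largest invariant factor d_v of the incidence matrix divides kn/t. -/
open Matrix

/-- (Klemm) For a symmetric 2-(v,k,λ) design of order `n = k - λ` with
`t = gcd(n, λ)`, the largest invariant factor `d_v` of the incidence matrix
divides `k·n/t`. -/
theorem symmetric_design_last_invariant_factor_dvd
    (v k lam : ℕ) (hv : 2 ≤ v) (hk : 2 ≤ k) (hlam : lam < k)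
    (B : Fin v → Finset (Fin v))
    (hcard : ∀ i, (B i).card = k)
    (hpair : ∀ x y : Fin v, x ≠ y →
      (Finset.univ.filter (fun i => x ∈ B i ∧ y ∈ B i)).card = lam)
    (hparam : lam * (v - 1) = k * (k - 1))
    (A : Matrix (Fin v) (Fin v) ℤ)
    (hA : ∀ i j, A i j = if j ∈ B i then 1 else 0)
    (d : Fin v → ℤ)
    (hchain : ∀ i j : Fin v, i ≤ j → d i ∣ d j)
    (hsnf : ∃ (U V : Matrix (Fin v) (Fin v) ℤ),
      IsUnit U.det ∧ IsUnit V.det ∧ U * A * V = Matrix.diagonal d) :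
    d ⟨v - 1, by omega⟩ ∣ (k : ℤ) * (((k - lam) / Nat.gcd (k - lam) lam : ℕ) : ℤ) := by
  obtain ⟨U, V, hU, hV, hUV⟩ := hsnf
  set n := k - lam with hn
  set t := Nat.gcd n lam with ht
  have hn1 : 1 ≤ n := by omega
  have htn : t ∣ n := Nat.gcd_dvd_left _ _
  have htl : t ∣ lam := Nat.gcd_dvd_right _ _
  have ht1 : 0 < t := Nat.gcd_pos_of_pos_left _ hn1
  have htk : t ∣ k := by
    have hnk : n + lam = k := by omega
    exact hnk ▸ Nat.dvd_add htn htl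
  set a := k / t with ha
  set b := lam / t with hb
  set c := n / t with hc
  have hta : t * a = k := Nat.mul_div_cancel' htk
  have htb : t * b = lam := Nat.mul_div_cancel' htl
  have htc : t * c = n := Nat.mul_div_cancel' htn
  have habc : a = c + b := by
    have h : t * a = t * (c + b) := by rw [hta, Nat.mul_add, htb, htc]; omega
    exact Nat.eq_of_mul_eq_mul_left ht1 h
  -- replication number is k
  have hrep : ∀ x : Fin v, (Finset.univ.filter (fun i => x ∈ B i)).card = k := by
    intro x
    have h1 : ∀ y : Fin v, (Finset.univ.filter (fun i => x ∈ B i ∧ y ∈ B i)).card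
        = ∑ i : Fin v, if x ∈ B i then (if y ∈ B i then 1 else 0) else 0 := by
      intro y
      rw [Finset.card_filter]
      exact Finset.sum_congr rfl (fun i _ => by
        by_cases h1 : x ∈ B i <;> by_cases h2 : y ∈ B i <;> simp [h1, h2])
    have hcount : ∑ y ∈ Finset.univ.erase x,
        (Finset.univ.filter (fun i => x ∈ B i ∧ y ∈ B i)).card
        = (Finset.univ.filter (fun i => x ∈ B i)).card * (k - 1) := by
      simp only [h1]
      rw [Finset.sum_comm]
      have h2 : ∀ i : Fin v,
          (∑ y ∈ Finset.univ.erase x, if x ∈ B i then (if y ∈ B i then 1 else 0) else 0)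
          = if x ∈ B i then (k - 1) else 0 := by
        intro i
        by_cases hx : x ∈ B i
        · simp only [hx, if_true]
          rw [← Finset.card_filter]
          have he : (Finset.univ.erase x).filter (fun y => y ∈ B i) = (B i).erase x := by
            ext y
            simp [Finset.mem_erase, and_comm]
          rw [he, Finset.card_erase_of_mem hx, hcard i]
        · simp [hx]
      rw [Finset.sum_congr rfl (fun i _ => h2 i), ← Finset.sum_filter,
        Finset.sum_const, smul_eq_mul]
    have hlhs : ∑ y ∈ Finset.univ.erase x,
        (Finset.univ.filter (fun i => x ∈ B i ∧ y ∈ B i)).card = lam * (v - 1) := by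
      rw [Finset.sum_congr rfl
        (fun y hy => hpair x y (Ne.symm (Finset.mem_erase.mp hy).1)),
        Finset.sum_const, Finset.card_erase_of_mem (Finset.mem_univ x),
        Finset.card_univ, Fintype.card_fin]
      simp [mul_comm]
    have hkey : (Finset.univ.filter (fun i => x ∈ B i)).card * (k - 1) = k * (k - 1) := by
      rw [← hcount, hlhs, hparam]
    exact Nat.eq_of_mul_eq_mul_right (by omega) hkey
  -- column sums
  have hcolsum : ∀ y : Fin v, (∑ j, A j y) = (k : ℤ) := by
    intro y
    have : (∑ j, A j y) = ((Finset.univ.filter (fun i => y ∈ B i)).card : ℤ) := by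
      rw [Finset.card_filter]
      push_cast
      exact Finset.sum_congr rfl (fun j _ => by by_cases h : y ∈ B j <;> simp [hA, h])
    rw [this, hrep y]
  -- inner products of columns
  have hdot : ∀ x y : Fin v, (∑ j, A j x * A j y)
      = if x = y then (k : ℤ) else (lam : ℤ) := by
    intro x y
    have hs : (∑ j, A j x * A j y)
        = ((Finset.univ.filter (fun i => x ∈ B i ∧ y ∈ B i)).card : ℤ) := by
      rw [Finset.card_filter]
      push_cast
      exact Finset.sum_congr rfl (fun j _ => by
        rw [hA, hA]
        by_cases h1 : x ∈ B j <;> by_cases h2 : y ∈ B j <;> simp [h1, h2])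
    rw [hs]
    by_cases hxy : x = y
    · subst hxy
      rw [if_pos rfl]
      simp only [and_self]
      exact_mod_cast hrep x
    · rw [if_neg hxy]
      exact_mod_cast hpair x y hxy
  -- the quasi-inverse matrix
  set m : ℤ := (k : ℤ) * (c : ℤ) with hm
  set C : Matrix (Fin v) (Fin v) ℤ := fun i j => (a : ℤ) * A j i - (b : ℤ) with hC
  have hCA : C * A = m • (1 : Matrix (Fin v) (Fin v) ℤ) := by
    ext x y
    rw [Matrix.mul_apply]
    simp only [hC, sub_mul, Finset.sum_sub_distrib, mul_assoc, ← Finset.mul_sum]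
    rw [hdot x y, hcolsum y]
    by_cases hxy : x = y
    · subst hxy
      have hab : (a : ℤ) = (c : ℤ) + (b : ℤ) := by exact_mod_cast habc
      simp only [if_pos rfl, Matrix.smul_apply, Matrix.one_apply_eq, smul_eq_mul,
        mul_one, ite_true, if_true, eq_self_iff_true]
      rw [hab, hm]; ring
    · simp only [if_neg hxy, Matrix.smul_apply, Matrix.one_apply_ne hxy, smul_eq_mul, mul_zero]
      have h1 : (a : ℤ) * (lam : ℤ) = (b : ℤ) * (k : ℤ) := by
        have : a * lam = b * k := by
          calc a * lam = a * (t * b) := by rw [htb]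
            _ = (t * a) * b := by ring
            _ = k * b := by rw [hta]
            _ = b * k := by ring
        exact_mod_cast this
      rw [h1]; ring
  -- transfer to the diagonal form
  have hUi : U⁻¹ * U = 1 := Matrix.nonsing_inv_mul U hU
  have hVi : V⁻¹ * V = 1 := Matrix.nonsing_inv_mul V hV
  set C' : Matrix (Fin v) (Fin v) ℤ := V⁻¹ * C * U⁻¹ with hC'
  have hfin : C' * Matrix.diagonal d = m • (1 : Matrix (Fin v) (Fin v) ℤ) := by
    rw [← hUV, hC']
    calc V⁻¹ * C * U⁻¹ * (U * A * V)
        = V⁻¹ * C * (U⁻¹ * U) * A * V := by noncomm_ring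
      _ = V⁻¹ * (C * A) * V := by rw [hUi]; noncomm_ring
      _ = V⁻¹ * (m • 1) * V := by rw [hCA]
      _ = m • (V⁻¹ * V) := by
          rw [Matrix.mul_smul, Matrix.smul_mul, Matrix.mul_one]
      _ = m • 1 := by rw [hVi]
  set i0 : Fin v := ⟨v - 1, by omega⟩ with hi0
  have hent := congrFun (congrFun hfin i0) i0
  rw [Matrix.mul_diagonal] at hent
  simp only [Matrix.smul_apply, Matrix.one_apply_eq, smul_eq_mul, mul_one] at hent
  exact Dvd.intro_left _ hent
end

section
/- Let A be an integer matrix, p a prime, and for i ≥ 0 set M̄_i = {x̄ ∈ 𝔽_p^v : x ∈ ℤ^v, Ax ∈ p^i ℤ^b} (reduction mod p of lifts). Then for each i ≥ 0, the multiplicity of p^i among the p-parts of the elementary divisors of A (i.e., the number of invariant factors d_j with p-adic valuation exactly i) equals dim_{𝔽_p}(M̄_i / M̄_{i+1}). -/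
open Matrix

/-- For a `b × v` integer matrix `A`, a prime `p` and `i ≥ 0`, the submodule
`M̄ᵢ` of `𝔽_p^v`: reductions mod `p` of integer vectors `x` with `A x ≡ 0 (mod pⁱ)`. -/
def Mbar {b v : ℕ} (A : Matrix (Fin b) (Fin v) ℤ) (p : ℕ) [NeZero p] (i : ℕ) :
    Submodule (ZMod p) (Fin v → ZMod p) where
  carrier := {y | ∃ x : Fin v → ℤ, (∀ j, ((x j : ZMod p)) = y j) ∧
    ∀ r, ((p : ℤ)) ^ i ∣ A.mulVec x r}
  zero_mem' := ⟨0, fun j => by simp, fun r => by simp [Matrix.mulVec_zero]⟩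
  add_mem' := by
    rintro y y' ⟨x, hx, hdx⟩ ⟨x', hx', hdx'⟩
    exact ⟨x + x',
      fun j => by simp only [Pi.add_apply, Int.cast_add, hx j, hx' j],
      fun r => by rw [Matrix.mulVec_add]; exact dvd_add (hdx r) (hdx' r)⟩
  smul_mem' := by
    rintro c y ⟨x, hx, hdx⟩
    refine ⟨(c.val : ℤ) • x, fun j => ?_, fun r => ?_⟩
    · have : (((c.val : ℤ) * x j : ℤ) : ZMod p) = (c.val : ZMod p) * (x j : ZMod p) := by
        push_cast; ring
      simp [this, hx j, ZMod.natCast_val, ZMod.cast_id]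
    · rw [Matrix.mulVec_smul]
      exact Dvd.dvd.mul_left (hdx r) _


lemma mem_Mbar {b v : ℕ} {A : Matrix (Fin b) (Fin v) ℤ} {p : ℕ} [NeZero p] {i : ℕ}
    {y : Fin v → ZMod p} :
    y ∈ Mbar A p i ↔ ∃ x : Fin v → ℤ, (∀ j, ((x j : ZMod p)) = y j) ∧
      ∀ r, ((p : ℤ)) ^ i ∣ A.mulVec x r := Iff.rfl

lemma cast_mulVec {p : ℕ} [NeZero p] {n m : ℕ} (M : Matrix (Fin n) (Fin m) ℤ)
    (x : Fin m → ℤ) (r : Fin n) :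
    ((M.mulVec x r : ℤ) : ZMod p) =
      (M.map (Int.cast : ℤ → ZMod p)).mulVec (fun k => ((x k : ZMod p))) r := by
  simp [Matrix.mulVec, dotProduct, Matrix.map_apply]

lemma dvd_mulVec {n m : ℕ} {c : ℤ} (M : Matrix (Fin n) (Fin m) ℤ) {w : Fin m → ℤ}
    (h : ∀ s, c ∣ w s) (r : Fin n) : c ∣ M.mulVec w r := by
  unfold Matrix.mulVec dotProduct
  exact Finset.dvd_sum fun s _ => (h s).mul_left _

lemma Mbar_map {b v : ℕ} (p : ℕ) [NeZero p] (A : Matrix (Fin b) (Fin v) ℤ)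
    (U : Matrix (Fin b) (Fin b) ℤ) (V : Matrix (Fin v) (Fin v) ℤ)
    (hU : IsUnit U.det) (hV : IsUnit V.det) (i : ℕ) :
    Mbar A p i = (Mbar (U * A * V) p i).map
      (Matrix.toLin' (V.map (Int.cast : ℤ → ZMod p))) := by
  ext y
  simp only [Submodule.mem_map, mem_Mbar, Matrix.toLin'_apply]
  constructor
  · rintro ⟨x, hx, hdx⟩
    refine ⟨fun k => ((V⁻¹.mulVec x k : ℤ) : ZMod p), ⟨V⁻¹.mulVec x, fun j => rfl, fun r => ?_⟩, ?_⟩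
    · have : (U * A * V).mulVec (V⁻¹.mulVec x) r = (U * A).mulVec x r := by
        rw [Matrix.mulVec_mulVec, Matrix.mul_assoc (U * A), Matrix.mul_nonsing_inv V hV,
          Matrix.mul_one]
      rw [this, ← Matrix.mulVec_mulVec]
      exact dvd_mulVec U hdx r
    · funext j
      calc (V.map (Int.cast : ℤ → ZMod p)).mulVec (fun k => ((V⁻¹.mulVec x k : ℤ) : ZMod p)) j
          = ((V.mulVec (V⁻¹.mulVec x) j : ℤ) : ZMod p) := (cast_mulVec V (V⁻¹.mulVec x) j).symm
        _ = ((x j : ℤ) : ZMod p) := by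
            rw [Matrix.mulVec_mulVec, Matrix.mul_nonsing_inv V hV, Matrix.one_mulVec]
        _ = y j := hx j
  · rintro ⟨z', ⟨z, hz, hdz⟩, hy⟩
    refine ⟨V.mulVec z, fun j => ?_, fun r => ?_⟩
    · rw [cast_mulVec]
      have : (fun k => ((z k : ZMod p))) = z' := funext hz
      rw [this, ← hy]
    · have : A.mulVec (V.mulVec z) r = U⁻¹.mulVec ((U * A * V).mulVec z) r := by
        rw [Matrix.mulVec_mulVec, Matrix.mulVec_mulVec, ← Matrix.mul_assoc,
          ← Matrix.mul_assoc, Matrix.nonsing_inv_mul U hU, Matrix.one_mul]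
      rw [this]
      exact dvd_mulVec U⁻¹ hdz r

lemma finrank_pi_bot {v : ℕ} (p : ℕ) [hp : Fact p.Prime] (s : Set (Fin v))
    [DecidablePred (· ∈ s)] :
    Module.finrank (ZMod p) (Submodule.pi s (fun _ => (⊥ : Submodule (ZMod p) (ZMod p))))
      = Fintype.card {j : Fin v // j ∉ s} := by
  let e : (Submodule.pi s (fun _ => (⊥ : Submodule (ZMod p) (ZMod p)))) ≃ₗ[ZMod p]
      ({j : Fin v // j ∉ s} → ZMod p) :=
    { toFun := fun y j => y.1 j.1
      map_add' := fun _ _ => rfl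
      map_smul' := fun _ _ => rfl
      invFun := fun z => ⟨fun j => if h : j ∈ s then 0 else z ⟨j, h⟩,
        Submodule.mem_pi.mpr fun j hj => by simp [hj]⟩
      left_inv := fun y => Subtype.ext (funext fun j => by
        by_cases h : j ∈ s
        · simpa [h] using ((Submodule.mem_bot (ZMod p)).mp ((Submodule.mem_pi.mp y.2) j h)).symm
        · simp [h])
      right_inv := fun z => funext fun j => by simp [j.2] }
  rw [LinearEquiv.finrank_eq e, Module.finrank_fintype_fun_eq_card]

lemma diag_mulVec_dvd {b v : ℕ} (hbv : v ≤ b) (d : Fin v → ℤ) (x : Fin v → ℤ) (c : ℤ) :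
    (∀ r, c ∣ (Matrix.of fun (r : Fin b) (j : Fin v) =>
        if (r : ℕ) = (j : ℕ) then d j else 0).mulVec x r)
      ↔ ∀ j, c ∣ d j * x j := by
  have hval : ∀ r : Fin b, ∀ hr : (r : ℕ) < v,
      (Matrix.of fun (r : Fin b) (j : Fin v) =>
        if (r : ℕ) = (j : ℕ) then d j else 0).mulVec x r
        = d ⟨r, hr⟩ * x ⟨r, hr⟩ := by
    intro r hr
    unfold Matrix.mulVec dotProduct
    rw [Finset.sum_eq_single (⟨(r : ℕ), hr⟩ : Fin v)]
    · simp
    · intro k _ hk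
      have : ¬ ((r : ℕ) = (k : ℕ)) := by
        intro h
        exact hk (by apply Fin.ext; simp [← h])
      simp [Matrix.of_apply, this]
    · simp
  constructor
  · intro h j
    have := h (Fin.castLE hbv j)
    rwa [hval (Fin.castLE hbv j) (by simpa using j.isLt), show (⟨((Fin.castLE hbv j) : ℕ),
      by simpa using j.isLt⟩ : Fin v) = j from by apply Fin.ext; simp] at this
  · intro h r
    by_cases hr : (r : ℕ) < v
    · rw [hval r hr]; exact h _
    · have : (Matrix.of fun (r : Fin b) (j : Fin v) =>
          if (r : ℕ) = (j : ℕ) then d j else 0).mulVec x r = 0 := by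
        unfold Matrix.mulVec dotProduct
        apply Finset.sum_eq_zero
        intro k _
        have hne : ¬ ((r : ℕ) = (k : ℕ)) := by
          have := k.isLt; omega
        simp [Matrix.of_apply, hne]
      rw [this]; exact dvd_zero c

lemma Mbar_diag' {b v : ℕ} (p : ℕ) [hp : Fact p.Prime] (hbv : v ≤ b) (d : Fin v → ℤ)
    (hd0 : ∀ j, d j ≠ 0) (i : ℕ) (y : Fin v → ZMod p) :
    ((∃ x : Fin v → ℤ, (∀ j, ((x j : ZMod p)) = y j) ∧
        ∀ r, ((p : ℤ)) ^ i ∣ (Matrix.of fun (r : Fin b) (j : Fin v) =>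
          if (r : ℕ) = (j : ℕ) then d j else 0).mulVec x r))
      ↔ ∀ j, (d j).natAbs.factorization p < i → y j = 0 := by
  have hpp := hp.out
  constructor
  · rintro ⟨x, hx, hdx⟩ j hj
    rw [← hx j, ZMod.intCast_zmod_eq_zero_iff_dvd]
    have h1 : (p : ℤ) ^ i ∣ d j * x j := (diag_mulVec_dvd hbv d x _).mp hdx j
    by_cases hx0 : x j = 0
    · simp [hx0]
    have h2 : p ^ i ∣ (d j * x j).natAbs := by
      have := Int.natAbs_dvd_natAbs.mpr h1
      simpa [Int.natAbs_pow] using this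
    have hne : (d j * x j).natAbs ≠ 0 := by
      simp only [Int.natAbs_mul, Nat.mul_ne_zero_iff, Int.natAbs_ne_zero]
      exact ⟨hd0 j, hx0⟩
    have h3 : i ≤ ((d j * x j).natAbs).factorization p :=
      (Nat.Prime.pow_dvd_iff_le_factorization hpp hne).mp h2
    rw [Int.natAbs_mul,
      Nat.factorization_mul (Int.natAbs_ne_zero.mpr (hd0 j)) (Int.natAbs_ne_zero.mpr hx0),
      Finsupp.add_apply] at h3
    have h5 : p ^ 1 ∣ (x j).natAbs :=
      (Nat.Prime.pow_dvd_iff_le_factorization hpp (Int.natAbs_ne_zero.mpr hx0)).mpr (by omega)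
    exact Int.natCast_dvd.mpr (by simpa using h5)
  · intro h
    refine ⟨fun j => if (d j).natAbs.factorization p < i then 0 else ((y j).val : ℤ),
      fun j => ?_, ?_⟩
    · by_cases hj : (d j).natAbs.factorization p < i
      · simp [hj, h j hj]
      · simp [hj, ZMod.natCast_val, ZMod.cast_id]
    · rw [diag_mulVec_dvd hbv]
      intro j
      by_cases hj : (d j).natAbs.factorization p < i
      · simp [hj]
      · have h6 : p ^ i ∣ (d j).natAbs :=
          (Nat.Prime.pow_dvd_iff_le_factorization hpp (Int.natAbs_ne_zero.mpr (hd0 j))).mpr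
            (by omega)
        have h7 : (p : ℤ) ^ i ∣ d j := by
          have : ((p ^ i : ℕ) : ℤ) ∣ d j := Int.natCast_dvd.mpr h6
          simpa using this
        exact h7.mul_right _

/-- Let `A` be a `b × v` integer matrix (`v ≤ b`) with nonzero invariant
factors `d₁ ∣ d₂ ∣ ⋯ ∣ d_v` (so `A` is unimodularly equivalent to the
rectangular diagonal matrix with entries `d`).  For each `i ≥ 0`, the number
of invariant factors whose `p`-adic valuation is exactly `i` equals
`dim_{𝔽_p}(M̄ᵢ / M̄ᵢ₊₁)`, i.e. `dim M̄ᵢ = dim M̄ᵢ₊₁ + #{j : v_p(d_j) = i}`. -/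
theorem smith_multiplicity_eq_filtration_dim
    (b v : ℕ) (hbv : v ≤ b) (p : ℕ) [hp : Fact p.Prime]
    (A : Matrix (Fin b) (Fin v) ℤ)
    (d : Fin v → ℤ) (hd0 : ∀ j, d j ≠ 0)
    (hchain : ∀ i j : Fin v, i ≤ j → d i ∣ d j)
    (hsnf : ∃ (U : Matrix (Fin b) (Fin b) ℤ) (V : Matrix (Fin v) (Fin v) ℤ),
      IsUnit U.det ∧ IsUnit V.det ∧
      U * A * V = Matrix.of fun (i : Fin b) (j : Fin v) =>
        if (i : ℕ) = (j : ℕ) then d j else 0)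
    (i : ℕ) :
    Module.finrank (ZMod p) (Mbar A p i)
      = Module.finrank (ZMod p) (Mbar A p (i + 1))
        + (Finset.univ.filter fun j => (d j).natAbs.factorization p = i).card := by
  classical
  obtain ⟨U, V, hU, hV, hUAV⟩ := hsnf
  have hVmap : IsUnit ((V.map (Int.cast : ℤ → ZMod p)).det) := by
    have : (V.map (Int.cast : ℤ → ZMod p)).det = (Int.castRingHom (ZMod p)) V.det := by
      rw [RingHom.map_det]
      rfl
    rw [this]
    exact hV.map (Int.castRingHom (ZMod p))
  have hinv : Invertible (V.map (Int.cast : ℤ → ZMod p)) :=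
    Matrix.invertibleOfIsUnitDet _ hVmap
  have hrank : ∀ k, Module.finrank (ZMod p) (Mbar A p k)
      = (Finset.univ.filter fun j => k ≤ (d j).natAbs.factorization p).card := by
    intro k
    rw [Mbar_map p A U V hU hV k, hUAV]
    rw [show Matrix.toLin' (V.map (Int.cast : ℤ → ZMod p))
        = ((V.map (Int.cast : ℤ → ZMod p)).toLinearEquiv' hinv :
            (Fin v → ZMod p) →ₗ[ZMod p] (Fin v → ZMod p))
      from (Matrix.toLinearEquiv'_apply _ hinv).symm]
    rw [LinearEquiv.finrank_map_eq]
    have hset : Mbar (Matrix.of fun (r : Fin b) (j : Fin v) =>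
          if (r : ℕ) = (j : ℕ) then d j else 0) p k
        = Submodule.pi {j | (d j).natAbs.factorization p < k} (fun _ => ⊥) := by
      ext y
      rw [mem_Mbar, Submodule.mem_pi]
      simp only [Submodule.mem_bot, Set.mem_setOf_eq]
      exact Mbar_diag' p hbv d hd0 k y
    rw [hset, finrank_pi_bot, Fintype.card_subtype]
    congr 1
    ext j
    simp [not_lt]
  rw [hrank i, hrank (i + 1)]
  have h1 : (Finset.univ.filter fun j => i ≤ (d j).natAbs.factorization p).filter
        (fun j => i + 1 ≤ (d j).natAbs.factorization p)
      = Finset.univ.filter fun j => i + 1 ≤ (d j).natAbs.factorization p := by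
    ext j
    simp only [Finset.mem_filter, Finset.mem_univ, true_and]
    omega
  have h2 : (Finset.univ.filter fun j => i ≤ (d j).natAbs.factorization p).filter
        (fun j => ¬ (i + 1 ≤ (d j).natAbs.factorization p))
      = Finset.univ.filter fun j => (d j).natAbs.factorization p = i := by
    ext j
    simp only [Finset.mem_filter, Finset.mem_univ, true_and, not_le]
    omega
  have key := Finset.card_filter_add_card_filter_not
    (s := Finset.univ.filter fun j => i ≤ (d j).natAbs.factorization p)
    (p := fun j => i + 1 ≤ (d j).natAbs.factorization p)
  rw [h1, h2] at key
  omega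
end

section
/- Let U_β = ∪_{r∈𝔽_q} C_r be a Buekenhout–Metz unital in PG(2,q²) that is a union of q conics C_r pairwise meeting only in the common point P_∞, where every secant line of U_β meets each C_r in 0 or 2 points if it misses P_∞, and in exactly 2 points of each C_r if it passes through P_∞. Then the characteristic vectors v^{C_r}, r ∈ 𝔽_q, lie in the dual of the binary code C₂(U_β) of the associated 2-(q³+1, q+1, 1) design and are linearly independent over 𝔽₂; consequently dim C₂(U_β) ≤ q³ + 1 - q. -/
open Finset

/-- (Baker–Wantz) Let `U_β` be a Buekenhout–Metz unital design, a
2-(q³+1, q+1, 1) design whose point set is the union of `q` conics `C_r`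
(each of `q²+1` points) pairwise meeting only in a common point `P∞`, such
that every block meets each conic in an even number (0 or 2) of points.
Then the characteristic vectors of the conics lie in the dual of the binary
code `C₂(U_β)` and are linearly independent over `𝔽₂`; consequently
`dim C₂(U_β) ≤ q³ + 1 - q`. -/
theorem buekenhout_metz_unital_binary_code_bound
    (q : ℕ) (hq : IsPrimePow q) (hodd : Odd q)
    (P : Type*) [Fintype P] [DecidableEq P] (hP : Fintype.card P = q ^ 3 + 1)
    (𝓑 : Finset (Finset P))
    (hcard : ∀ Bl ∈ 𝓑, Bl.card = q + 1)
    (hpair : ∀ x y : P, x ≠ y → (𝓑.filter (fun Bl => x ∈ Bl ∧ y ∈ Bl)).card = 1)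
    (C : Fin q → Finset P) (Pinf : P)
    (hC : ∀ r, (C r).card = q ^ 2 + 1)
    (hmeet : ∀ r r' : Fin q, r ≠ r' → C r ∩ C r' = {Pinf})
    (hblock : ∀ Bl ∈ 𝓑, ∀ r, (Bl ∩ C r).card = 0 ∨ (Bl ∩ C r).card = 2) :
    (∀ r : Fin q, ∀ u ∈ Submodule.span (ZMod 2)
        {u : P → ZMod 2 | ∃ Bl ∈ 𝓑, u = fun x => if x ∈ Bl then 1 else 0},
      ∑ x : P, (if x ∈ C r then (1 : ZMod 2) else 0) * u x = 0) ∧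
    LinearIndependent (ZMod 2)
      (fun r : Fin q => fun x : P => if x ∈ C r then (1 : ZMod 2) else 0) ∧
    Module.finrank (ZMod 2) (Submodule.span (ZMod 2)
        {u : P → ZMod 2 | ∃ Bl ∈ 𝓑, u = fun x => if x ∈ Bl then 1 else 0})
      ≤ q ^ 3 + 1 - q := by
  classical
  have hq2 : 2 ≤ q := hq.two_le
  -- the linear functionals u ↦ ⟨χ_{C r}, u⟩
  let ℓ : Fin q → (P → ZMod 2) →ₗ[ZMod 2] ZMod 2 := fun r =>
    { toFun := fun u => ∑ x : P, (if x ∈ C r then (1 : ZMod 2) else 0) * u x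
      map_add' := fun u v => by
        simp [mul_add, Finset.sum_add_distrib]
      map_smul' := fun a u => by
        simp only [Pi.smul_apply, smul_eq_mul, RingHom.id_apply, Finset.mul_sum]
        congr 1; funext x; ring }
  have hgen : ∀ r, ∀ Bl ∈ 𝓑, ℓ r (fun x => if x ∈ Bl then 1 else 0) = 0 := by
    intro r Bl hBl
    have hval : ℓ r (fun x => if x ∈ Bl then 1 else 0)
        = ((Bl ∩ C r).card : ZMod 2) := by
      show (∑ x : P, (if x ∈ C r then (1 : ZMod 2) else 0)
          * (if x ∈ Bl then 1 else 0)) = _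
      have : ∀ x : P, (if x ∈ C r then (1 : ZMod 2) else 0)
          * (if x ∈ Bl then 1 else 0) = if x ∈ Bl ∩ C r then 1 else 0 := by
        intro x
        by_cases h1 : x ∈ C r <;> by_cases h2 : x ∈ Bl <;>
          simp [h1, h2, Finset.mem_inter]
      rw [Finset.sum_congr rfl fun x _ => this x, Finset.sum_ite_mem,
        Finset.univ_inter, Finset.sum_const, nsmul_eq_mul, mul_one]
    rcases hblock Bl hBl r with h | h <;> rw [hval, h] <;> decide
  have hdual : ∀ r, Submodule.span (ZMod 2)
      {u : P → ZMod 2 | ∃ Bl ∈ 𝓑, u = fun x => if x ∈ Bl then 1 else 0}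
      ≤ LinearMap.ker (ℓ r) := by
    intro r
    refine Submodule.span_le.mpr ?_
    rintro u ⟨Bl, hBl, rfl⟩
    exact LinearMap.mem_ker.mpr (hgen r Bl hBl)
  -- choose a private point on each conic
  have hex : ∀ r, ∃ x ∈ C r, x ≠ Pinf := by
    intro r
    refine Finset.exists_mem_ne ?_ Pinf
    rw [hC r]
    have : 0 < q ^ 2 := pow_pos (by omega) 2
    omega
  choose x hxC hxP using hex
  have hx_unique : ∀ r r' : Fin q, x r ∈ C r' → r' = r := by
    intro r r' h
    by_contra hne
    have hmem : x r ∈ C r' ∩ C r := Finset.mem_inter.mpr ⟨h, hxC r⟩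
    rw [hmeet r' r hne] at hmem
    exact hxP r (Finset.mem_singleton.mp hmem)
  -- linear independence
  have hli : LinearIndependent (ZMod 2)
      (fun r : Fin q => fun y : P => if y ∈ C r then (1 : ZMod 2) else 0) := by
    rw [Fintype.linearIndependent_iff]
    intro g hg r
    have h := congrFun hg (x r)
    simp only [Finset.sum_apply, Pi.smul_apply, smul_eq_mul, Pi.zero_apply] at h
    rw [Finset.sum_eq_single r] at h
    · simpa [hxC r] using h
    · intro b _ hbr
      have hnb : x r ∉ C b := fun hmem => hbr (hx_unique r b hmem)
      simp [hnb]
    · simp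
  -- the packaged map
  let φ : (P → ZMod 2) →ₗ[ZMod 2] (Fin q → ZMod 2) := LinearMap.pi ℓ
  have hker : Submodule.span (ZMod 2)
      {u : P → ZMod 2 | ∃ Bl ∈ 𝓑, u = fun x => if x ∈ Bl then 1 else 0}
      ≤ LinearMap.ker φ := by
    intro u hu
    rw [LinearMap.mem_ker]
    funext r
    exact LinearMap.mem_ker.mp (hdual r hu)
  have hφsingle : ∀ s : Fin q,
      φ (fun y => if y = x s then 1 else 0) = Pi.single s 1 := by
    intro s
    funext r
    show (∑ y : P, (if y ∈ C r then (1 : ZMod 2) else 0)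
        * (if y = x s then 1 else 0)) = _
    have hterm : ∀ y : P, (if y ∈ C r then (1 : ZMod 2) else 0)
        * (if y = x s then 1 else 0)
        = if y = x s then (if y ∈ C r then (1 : ZMod 2) else 0) else 0 := by
      intro y
      by_cases h1 : y ∈ C r <;> by_cases h2 : y = x s <;> simp [h1, h2]
    rw [Finset.sum_congr rfl fun y _ => hterm y, Finset.sum_ite_eq' Finset.univ (x s)
      (fun y => if y ∈ C r then (1 : ZMod 2) else 0)]
    simp only [Finset.mem_univ, if_true, Pi.single_apply]
    by_cases hrs : r = s
    · subst hrs; simp [hxC r]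
    · have : x s ∉ C r := fun hmem => hrs (hx_unique s r hmem)
      simp [this, hrs]
  have htop : LinearMap.range φ = ⊤ := by
    rw [eq_top_iff, ← (Pi.basisFun (ZMod 2) (Fin q)).span_eq]
    refine Submodule.span_le.mpr ?_
    rintro _ ⟨s, rfl⟩
    exact ⟨fun y => if y = x s then 1 else 0, by rw [hφsingle s, Pi.basisFun_apply]⟩
  have hrank := LinearMap.finrank_range_add_finrank_ker φ
  rw [htop, finrank_top, Module.finrank_fintype_fun_eq_card,
    Module.finrank_fintype_fun_eq_card, Fintype.card_fin, hP] at hrank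
  have hkerdim : Module.finrank (ZMod 2) (LinearMap.ker φ) = q ^ 3 + 1 - q := by
    omega
  refine ⟨fun r u hu => LinearMap.mem_ker.mp (hdual r hu), hli, ?_⟩
  calc Module.finrank (ZMod 2) (Submodule.span (ZMod 2)
        {u : P → ZMod 2 | ∃ Bl ∈ 𝓑, u = fun x => if x ∈ Bl then 1 else 0})
      ≤ Module.finrank (ZMod 2) (LinearMap.ker φ) := Submodule.finrank_mono hker
    _ = q ^ 3 + 1 - q := hkerdim
end

section
/- Let D be a (v,k,λ)-difference set in an abelian group G of order v with gcd(v, k-λ) = 1, let p be a prime not dividing v, and let 𝔓 be a prime ideal of ℤ[ξ_v] above p. Then the p-rank of the development design Dev(D) equals the number of complex characters χ of G (including the trivial one) with χ(D) ≢ 0 (mod 𝔓). -/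
/-!
Reduction modulo `𝔓` lands in the residue field `κ(𝔓)`, of characteristic `p ∤ v`. There
it is injective on `v`-th roots of unity (if `x ≠ y` then `∑ xⁱ y^(v-1-i) = 0`, which
reduces to `v · y^(v-1) = 0`), so it identifies the `v` characters `G → R` with the `v`
characters `G → κ(𝔓)`. The latter are linearly independent, hence form a basis of common
eigenvectors of the incidence matrix `(1_D(g⁻¹x))`, with eigenvalues `ψ(D)`. Its rank over
`κ(𝔓)`, which is its rank over `𝔽_p`, is therefore the number of `ψ` with `ψ(D) ≠ 0`.
-/

open Finset Matrix

theorem eq_of_map_eq_of_pow_eq_one {R S : Type*} [CommRing R] [IsDomain R] [CommRing S]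
    (f : R →+* S) {n : ℕ} (hn : (n : S) ≠ 0) {x y : R} (hx : x ^ n = 1) (hy : y ^ n = 1)
    (h : f x = f y) : x = y := by
  by_contra hxy
  have hsum : ∑ i ∈ range n, x ^ i * y ^ (n - 1 - i) = 0 := by
    have := geom_sum₂_mul x y n
    rw [hx, hy, sub_self, mul_eq_zero] at this
    exact this.resolve_right (sub_ne_zero.2 hxy)
  obtain _ | m := n
  · exact hn Nat.cast_zero
  have hterm : ∀ i ∈ range (m + 1), f x ^ i * f y ^ (m + 1 - 1 - i) = f y ^ m := fun i hi => by
    rw [h, ← pow_add]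
    congr 1
    have := mem_range.1 hi
    omega
  have hfsum : ((m + 1 : ℕ) : S) * f y ^ m = 0 := by
    have := congrArg f hsum
    simp only [map_sum, map_mul, map_pow, map_zero] at this
    rwa [sum_congr rfl hterm, sum_const, card_range, nsmul_eq_mul] at this
  apply hn
  calc ((m + 1 : ℕ) : S) = (m + 1 : ℕ) * f (y ^ (m + 1)) := by rw [hy, map_one, mul_one]
    _ = (m + 1 : ℕ) * f y ^ m * f y := by rw [map_pow, pow_succ, mul_assoc]
    _ = 0 := by rw [hfsum, zero_mul]

theorem IsPrimitiveRoot.hasEnoughRootsOfUnity {R : Type*} [CommRing R] [IsDomain R] {ζ : R}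
    {n : ℕ} [NeZero n] (hζ : IsPrimitiveRoot ζ n) : HasEnoughRootsOfUnity R n :=
  ⟨⟨ζ, hζ⟩, rootsOfUnity.isCyclic R n⟩

theorem IsPrimitiveRoot.map_of_natCast_ne_zero {R S : Type*} [CommRing R] [IsDomain R]
    [CommRing S] {ζ : R} {n : ℕ} (hζ : IsPrimitiveRoot ζ n) (f : R →+* S)
    (hn : (n : S) ≠ 0) :
    IsPrimitiveRoot (f ζ) n := by
  refine ⟨by rw [← map_pow, hζ.pow_eq_one, map_one], fun l hl => hζ.dvd_of_pow_eq_one l ?_⟩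
  refine eq_of_map_eq_of_pow_eq_one f hn ?_ (one_pow n) (by rw [map_pow, hl, map_one])
  rw [← pow_mul, mul_comm, pow_mul, hζ.pow_eq_one, one_pow]

theorem HasEnoughRootsOfUnity.of_ringHom {R S : Type*} [CommRing R] [IsDomain R] [CommRing S]
    [IsDomain S] {n : ℕ} [NeZero n] [HasEnoughRootsOfUnity R n] (f : R →+* S)
    (hn : (n : S) ≠ 0) :
    HasEnoughRootsOfUnity S n :=
  ((exists_primitiveRoot R n).choose_spec.map_of_natCast_ne_zero f hn).hasEnoughRootsOfUnity

theorem MonoidHom.natCard_eq_of_hasEnoughRootsOfUnity (G M : Type*) [CommGroup G] [Finite G]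
    [CommMonoid M] [HasEnoughRootsOfUnity M (Monoid.exponent G)] :
    Nat.card (G →* M) = Nat.card G := by
  rw [Nat.card_congr MonoidHom.toHomUnitsMulEquiv.toEquiv,
    CommGroup.card_monoidHom_of_hasEnoughRootsOfUnity]

theorem MonoidHom.comp_bijective_of_hasEnoughRootsOfUnity {G R S : Type*} [CommGroup G]
    [Finite G] [CommRing R] [IsDomain R] [CommRing S]
    [HasEnoughRootsOfUnity R (Monoid.exponent G)] [HasEnoughRootsOfUnity S (Monoid.exponent G)]
    (f : R →+* S) (hn : (Monoid.exponent G : S) ≠ 0) :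
    Function.Bijective fun χ : G →* R => (f : R →* S).comp χ := by
  have hinj : Function.Injective fun χ : G →* R => (f : R →* S).comp χ := by
    intro χ₁ χ₂ h
    ext g
    refine eq_of_map_eq_of_pow_eq_one f hn ?_ ?_ (DFunLike.congr_fun h g) <;>
      rw [← map_pow, Monoid.pow_exponent_eq_one, map_one]
  have hcard := natCard_eq_of_hasEnoughRootsOfUnity G S
  have : Finite (G →* S) := Nat.finite_of_card_ne_zero (by rw [hcard]; exact Nat.card_pos.ne')
  exact hinj.bijective_of_nat_card_le
    (hcard.trans (natCard_eq_of_hasEnoughRootsOfUnity G R).symm).le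

namespace Matrix

theorem rank_fromBlocks_one_zero_zero_zero {K m n : Type*} [Field K] [Fintype m] [Fintype n]
    [DecidableEq m] :
    (fromBlocks (1 : Matrix m m K) 0 0 (0 : Matrix n n K)).rank = Fintype.card m := by
  classical
  rw [← diagonal_one, ← diagonal_zero, fromBlocks_diagonal, rank_diagonal]
  exact Fintype.card_congr
    ((Equiv.subtypeEquivRight (by rintro (_ | _) <;> simp)).trans Equiv.sumIsLeft)

variable {F K n : Type*} [Field F] [Field K] [Fintype n] [DecidableEq n]

theorem rank_map (f : F →+* K) (M : Matrix n n F) : (M.map f).rank = M.rank := by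
  obtain ⟨V, U, e, hV, hU, hM⟩ := M.exists_rank_normal_form
  have hfM : V.map f * M.map f * U.map f = (fromBlocks 1 0 0 0).submatrix e e := by
    rw [← Matrix.map_mul, ← Matrix.map_mul, hM, ← submatrix_map, fromBlocks_map]
    simp
  have hVf : IsUnit (V.map f).det := (isUnit_iff_isUnit_det _).1 (hV.map f.mapMatrix)
  have hUf : IsUnit (U.map f).det := (isUnit_iff_isUnit_det _).1 (hU.map f.mapMatrix)
  rw [← rank_mul_eq_right_of_isUnit_det _ _ hVf, ← rank_mul_eq_left_of_isUnit_det _ _ hUf, hfM,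
    rank_submatrix, rank_fromBlocks_one_zero_zero_zero, Fintype.card_fin]

theorem rank_eq_card_of_mul_eq_mul_diagonal [DecidableEq K] {M P : Matrix n n K} {w : n → K}
    (hP : IsUnit P.det) (h : M * P = P * diagonal w) :
    M.rank = Fintype.card {i // w i ≠ 0} := by
  rw [← rank_mul_eq_left_of_isUnit_det P M hP, h, rank_mul_eq_right_of_isUnit_det P _ hP,
    rank_diagonal]

end Matrix

def groupMatrix {G α : Type*} [Group G] (a : G → α) : Matrix G G α :=
  of fun g x => a (g⁻¹ * x)

theorem rank_groupMatrix {G K : Type*} [CommGroup G] [Fintype G] [DecidableEq G]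
    [Field K] [HasEnoughRootsOfUnity K (Monoid.exponent G)] (a : G → K) :
    (groupMatrix a).rank = Nat.card {ψ : G →* K // ∑ x, a x * ψ x ≠ 0} := by
  classical
  obtain ⟨e⟩ := CommGroup.monoidHom_mulEquiv_of_hasEnoughRootsOfUnity G K
  let χ : G ≃ (G →* K) := e.symm.toEquiv.trans MonoidHom.toHomUnitsMulEquiv.symm.toEquiv
  let P : Matrix G G K := Matrix.of fun g x => χ x g
  have hP : IsUnit P.det := by
    rw [← isUnit_iff_isUnit_det, ← linearIndependent_cols_iff_isUnit]
    exact (linearIndependent_monoidHom G K).comp χ χ.injective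
  have hMP : groupMatrix a * P = P * diagonal fun x => ∑ y, a y * χ x y := by
    ext g x
    rw [mul_diagonal, mul_apply, Finset.mul_sum]
    refine Fintype.sum_equiv (Equiv.mulLeft g⁻¹) _ _ fun y => ?_
    simp only [groupMatrix, of_apply, P, Equiv.coe_mulLeft]
    rw [mul_left_comm, ← map_mul, mul_inv_cancel_left]
  rw [rank_eq_card_of_mul_eq_mul_diagonal hP hMP, ← Nat.card_eq_fintype_card]
  exact Nat.card_congr (χ.subtypeEquiv fun _ => Iff.rfl)

theorem macwilliams_mann_p_rank_general
    (G : Type*) [CommGroup G] [Fintype G] [DecidableEq G]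
    (v : ℕ) (hG : Fintype.card G = v)
    (D : Finset G)
    (p : ℕ) [hp : Fact p.Prime] (hpv : ¬ p ∣ v)
    (R : Type*) [CommRing R] [IsDomain R]
    (ζ : R) (hζ : IsPrimitiveRoot ζ v)
    (𝔓 : Ideal R) (h𝔓 : 𝔓.IsPrime) (hp𝔓 : (p : R) ∈ 𝔓)
    (A : Matrix G G (ZMod p))
    (hA : ∀ g x : G, A g x = if g⁻¹ * x ∈ D then 1 else 0) :
    A.rank = Nat.card {χ : G →* R // (∑ d ∈ D, χ d) ∉ 𝔓} := by
  subst hG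
  have : HasEnoughRootsOfUnity R (Monoid.exponent G) :=
    have := hζ.hasEnoughRootsOfUnity
    .of_dvd R Group.exponent_dvd_card
  have := h𝔓
  have : CharP 𝔓.ResidueField p := (CharP.charP_iff_prime_eq_zero hp.out).2 <| by
    simpa using Ideal.algebraMap_residueField_eq_zero.2 hp𝔓
  have hexp : (Monoid.exponent G : 𝔓.ResidueField) ≠ 0 := by
    rw [Ne, CharP.cast_eq_zero_iff _ p]
    exact fun h => hpv (h.trans Group.exponent_dvd_card)
  have : HasEnoughRootsOfUnity 𝔓.ResidueField (Monoid.exponent G) :=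
    .of_ringHom (algebraMap R _) hexp
  have hreduce := MonoidHom.comp_bijective_of_hasEnoughRootsOfUnity (G := G) (algebraMap R _) hexp
  let f := ZMod.castHom (dvd_refl p) 𝔓.ResidueField
  have hAf : A.map f = groupMatrix fun y => if y ∈ D then 1 else 0 := by
    ext g x
    simp [hA, groupMatrix]
  calc A.rank = (A.map f).rank := (rank_map f A).symm
    _ = Nat.card {ψ : G →* 𝔓.ResidueField // ∑ d ∈ D, ψ d ≠ 0} := by
      rw [hAf, rank_groupMatrix]
      simp only [ite_mul, one_mul, zero_mul, sum_ite_mem, univ_inter]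
    _ = Nat.card {χ : G →* R // (∑ d ∈ D, χ d) ∉ 𝔓} := by
      refine Nat.card_congr ((Equiv.ofBijective _ hreduce).subtypeEquiv fun χ => ?_).symm
      simp [← map_sum]

/-- (MacWilliams–Mann) Let `D` be a `(v,k,λ)`-difference set in a finite
abelian group `G` of order `v` with `gcd(v, k-λ) = 1`, let `p` be a prime not
dividing `v`, and let `𝔓` be a prime ideal of `ℤ[ξ_v]` (a domain of
characteristic zero generated over `ℤ` by a primitive `v`-th root of unity)
containing `p`.  Then the `p`-rank of the development `Dev(D)` (the rank over
`𝔽_p` of its `v × v` incidence matrix) equals the number of characters `χ`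
of `G` with `χ(D) ≢ 0 (mod 𝔓)`. -/
theorem macwilliams_mann_p_rank
    (G : Type*) [CommGroup G] [Fintype G] [DecidableEq G]
    (v k lam : ℕ) (hG : Fintype.card G = v)
    (D : Finset G) (hD : D.card = k)
    (hdiff : ∀ g : G, g ≠ 1 →
      ((D ×ˢ D).filter (fun z => z.1 * z.2⁻¹ = g)).card = lam)
    (hgcd : Nat.gcd v (k - lam) = 1)
    (p : ℕ) [hp : Fact p.Prime] (hpv : ¬ p ∣ v)
    (R : Type*) [CommRing R] [IsDomain R] [CharZero R]
    (ζ : R) (hζ : IsPrimitiveRoot ζ v)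
    (hR : Algebra.adjoin ℤ ({ζ} : Set R) = ⊤)
    (𝔓 : Ideal R) (h𝔓 : 𝔓.IsPrime) (hp𝔓 : (p : R) ∈ 𝔓)
    (A : Matrix G G (ZMod p))
    (hA : ∀ g x : G, A g x = if g⁻¹ * x ∈ D then 1 else 0) :
    A.rank = Nat.card {χ : G →* R // (∑ d ∈ D, χ d) ∉ 𝔓} :=
  macwilliams_mann_p_rank_general G v hG D p (hp := hp) hpv R ζ hζ 𝔓 h𝔓 hp𝔓 A hA
end
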